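/- Let S be a band of topological groups. Then for every subset A of S and every open set U containing E(S), the closure of A in S is contained in (AU)*. -/

import Mathlib

open Set TopologicalSpace

/-- The principal left ideal (with `a` adjoined) generated by `a`: `{a} ∪ {s*a : s ∈ S}`. -/
def leftIdeal {S : Type*} [Semigroup S] (a : S) : Set S :=
  insert a {x | ∃ s, x = s * a}

/-- The principal right ideal (with `a` adjoined) generated by `a`: `{a} ∪ {a*s : s ∈ S}`. -/
def rightIdeal {S : Type*} [Semigroup S] (a : S) : Set S :=
  insert a {x | ∃ s, x = a * s}

/-- Green's relation ℋ on a semigroup. -/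
def greenH {S : Type*} [Semigroup S] (a b : S) : Prop :=
  leftIdeal a = leftIdeal b ∧ rightIdeal a = rightIdeal b

/-- The ℋ-class of an element. -/
def HClass {S : Type*} [Semigroup S] (x : S) : Set S := {y | greenH y x}

/-- A semigroup is completely regular if every element is completely regular. -/
def CompletelyRegularSemigroup (S : Type*) [Semigroup S] : Prop :=
  ∀ a : S, ∃ x, a = a * x * a ∧ a * x = x * a

/-- Green's relation ℋ is a congruence. -/
def HIsCongruence (S : Type*) [Semigroup S] : Prop :=
  ∀ a b c : S, greenH a b → greenH (a * c) (b * c) ∧ greenH (c * a) (c * b)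

/-- A cryptogroup is a completely regular semigroup in which ℋ is a congruence. -/
def IsCryptogroup (S : Type*) [Semigroup S] : Prop :=
  CompletelyRegularSemigroup S ∧ HIsCongruence S

/-- In a cryptogroup every ℋ-class is a group; `idp x` (written `x⁰`) is the identity of the
ℋ-class of `x`, and `inv x` (written `x⁻¹`) is the inverse of `x` inside its ℋ-class. -/
structure CryptoOps (S : Type*) [Semigroup S] where
  idp : S → S
  inv : S → S
  idp_mem : ∀ x, greenH (idp x) x
  idp_mul : ∀ x y, greenH y x → idp x * y = y
  mul_idp : ∀ x y, greenH y x → y * idp x = y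
  inv_mem : ∀ x, greenH (inv x) x
  mul_inv : ∀ x, x * inv x = idp x
  inv_mul : ∀ x, inv x * x = idp x

/-- The set `E(S)` of idempotents of a semigroup. -/
def idemSet (S : Type*) [Semigroup S] : Set S := {e | e * e = e}

/-- `(xU)* = {y ∈ S : x⁻¹*y ∈ U and x⁰ = y⁰}`. -/
def lstar {S : Type*} [Semigroup S] (ops : CryptoOps S) (x : S) (U : Set S) : Set S :=
  {y | ops.inv x * y ∈ U ∧ ops.idp x = ops.idp y}

/-- `(Ux)* = {y ∈ S : y*x⁻¹ ∈ U and x⁰ = y⁰}`. -/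
def rstar {S : Type*} [Semigroup S] (ops : CryptoOps S) (U : Set S) (x : S) : Set S :=
  {y | y * ops.inv x ∈ U ∧ ops.idp x = ops.idp y}

/-- `(AB)* = ⋃_{a ∈ A} (aB)*`. -/
def setStar {S : Type*} [Semigroup S] (ops : CryptoOps S) (A B : Set S) : Set S :=
  ⋃ a ∈ A, lstar ops a B

/-- A full subcryptogroup: contains all idempotents, and closed under multiplication
and inversion. -/
def IsFullSubcryptogroup {S : Type*} [Semigroup S] (ops : CryptoOps S) (K : Set S) : Prop :=
  idemSet S ⊆ K ∧ (∀ x ∈ K, ∀ y ∈ K, x * y ∈ K) ∧ (∀ x ∈ K, ops.inv x ∈ K)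

/-! For `y ∈ closure A`, the set of `a` with `y ∈ (aU)*` is `H_y ∩ {a : a⁻¹ * y ∈ U}`, since
`a⁰ = y⁰` exactly when `a ℋ y`. It is open because ℋ-classes are open and `a ↦ a⁻¹ * y` is
continuous, and it contains `y` because `y⁻¹ * y = y⁰ ∈ E(S) ⊆ U`; so it meets `A`. -/

theorem greenH.symm {S : Type*} [Semigroup S] {a b : S} (h : greenH a b) : greenH b a :=
  ⟨h.1.symm, h.2.symm⟩

theorem greenH.trans {S : Type*} [Semigroup S] {a b c : S} (hab : greenH a b)
    (hbc : greenH b c) : greenH a c :=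
  ⟨hab.1.trans hbc.1, hab.2.trans hbc.2⟩

namespace CryptoOps

variable {S : Type*} [Semigroup S] (ops : CryptoOps S)

theorem idp_mem_idemSet (x : S) : ops.idp x ∈ idemSet S :=
  ops.idp_mul x (ops.idp x) (ops.idp_mem x)

theorem idp_eq_idp_iff {a b : S} : ops.idp a = ops.idp b ↔ greenH a b := by
  constructor
  · intro h
    exact (ops.idp_mem a).symm.trans (h ▸ ops.idp_mem b)
  · intro h
    calc ops.idp a = ops.idp a * ops.idp b := (ops.mul_idp b _ ((ops.idp_mem a).trans h)).symm
      _ = ops.idp b := ops.idp_mul a _ ((ops.idp_mem b).trans h.symm)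

theorem mem_lstar_self {U : Set S} (hEU : idemSet S ⊆ U) (y : S) : y ∈ lstar ops y U :=
  ⟨ops.inv_mul y ▸ hEU (ops.idp_mem_idemSet y), rfl⟩

theorem isOpen_setOf_mem_lstar [TopologicalSpace S] [ContinuousMul S]
    (hinv : Continuous ops.inv) (hopen : ∀ x : S, IsOpen (HClass x))
    {U : Set S} (hU : IsOpen U) (y : S) : IsOpen {a | y ∈ lstar ops a U} := by
  have hH : IsOpen {a | ops.idp a = ops.idp y} := by
    rw [show {a | ops.idp a = ops.idp y} = HClass y from Set.ext fun _ => ops.idp_eq_idp_iff]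
    exact hopen y
  exact (hU.preimage (hinv.mul continuous_const)).inter hH

end CryptoOps

theorem stmt5_general {S : Type*} [Semigroup S] [TopologicalSpace S] [ContinuousMul S]
    (ops : CryptoOps S)
    (hinv : Continuous ops.inv) (hopen : ∀ x : S, IsOpen (HClass x))
    (A : Set S) (U : Set S) (hU : IsOpen U) (hEU : idemSet S ⊆ U) :
    closure A ⊆ setStar ops A U := by
  intro y hy
  obtain ⟨a, hya, haA⟩ := mem_closure_iff.mp hy _
    (ops.isOpen_setOf_mem_lstar hinv hopen hU y) (ops.mem_lstar_self hEU y)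
  exact mem_iUnion₂.mpr ⟨a, haA, hya⟩

/-- In a band of topological groups, for every `A ⊆ S` and every open `U ⊇ E(S)`,
`closure A ⊆ (AU)*`. -/
theorem stmt5 {S : Type*} [Semigroup S] [TopologicalSpace S] [ContinuousMul S]
    (ops : CryptoOps S) (hcrypt : IsCryptogroup S)
    (hinv : Continuous ops.inv) (hopen : ∀ x : S, IsOpen (HClass x))
    (A : Set S) (U : Set S) (hU : IsOpen U) (hEU : idemSet S ⊆ U) :
    closure A ⊆ setStar ops A U :=
  stmt5_general ops hinv hopen A U hU hEU
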